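/- Kantorovich–Rubinstein duality for the weighted p-product metric: for pseudometric spaces (X₁,d₁), (X₂,d₂) with values in [0,∞], parameters c₁,c₂ ∈ (0,1] and p ≥ 1, and elements (x₁,x₂), (y₁,y₂) ∈ X₁ × X₂, the distance d_p((x₁,x₂),(y₁,y₂)) = (c₁ d₁(x₁,y₁)^p + c₂ d₂(x₂,y₂)^p)^{1/p} equals d_e(ρ(f₁(x₁),f₂(x₂)), ρ(f₁(y₁),f₂(y₂))) for the nonexpansive functions f₁ = d₁(x₁,·), f₂ = d₂(x₂,·), where ρ(u,v) = (c₁u^p+c₂v^p)^{1/p}; consequently the supremum over all pairs of nonexpansive functions of this quantity equals d_p. -/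
import Mathlib

open ENNReal

/-- The extended Euclidean distance on `[0,∞]`. -/
noncomputable def de (a b : ℝ≥0∞) : ℝ≥0∞ := (a - b) + (b - a)

lemma de_le_iff {a b r : ℝ≥0∞} : de a b ≤ r ↔ a ≤ b + r ∧ b ≤ a + r := by
  rcases le_total a b with h | h
  · simp only [de, tsub_eq_zero_of_le h, zero_add]
    constructor
    · intro hr
      exact ⟨h.trans (le_add_right le_rfl), tsub_le_iff_left.mp hr⟩
    · intro ⟨_, h2⟩; exact tsub_le_iff_left.mpr h2
  · simp only [de, tsub_eq_zero_of_le h, add_zero]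
    constructor
    · intro hr
      exact ⟨tsub_le_iff_left.mp hr, h.trans (le_add_right le_rfl)⟩
    · intro ⟨h1, _⟩; exact tsub_le_iff_left.mpr h1

lemma de_zero_left (a : ℝ≥0∞) : de 0 a = a := by simp [de, zero_tsub]

/-- Two-term weighted Minkowski inequality in `ℝ≥0∞`. -/
lemma weighted_minkowski {p : ℝ} (hp : 1 ≤ p) (c₁ c₂ a b s t : ℝ≥0∞) :
    (c₁ * (a + s) ^ p + c₂ * (b + t) ^ p) ^ (1 / p) ≤
      (c₁ * a ^ p + c₂ * b ^ p) ^ (1 / p) + (c₁ * s ^ p + c₂ * t ^ p) ^ (1 / p) := by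
  have hp0 : (0 : ℝ) ≤ p := le_trans zero_le_one hp
  set e₁ := c₁ ^ (1 / p) with he₁
  set e₂ := c₂ ^ (1 / p) with he₂
  have hppos : 0 < p := lt_of_lt_of_le zero_lt_one hp
  have hc1 : e₁ ^ p = c₁ := by
    rw [he₁, ← ENNReal.rpow_mul, one_div, inv_mul_cancel₀ (ne_of_gt hppos), ENNReal.rpow_one]
  have hc2 : e₂ ^ p = c₂ := by
    rw [he₂, ← ENNReal.rpow_mul, one_div, inv_mul_cancel₀ (ne_of_gt hppos), ENNReal.rpow_one]
  have key := ENNReal.Lp_add_le (Finset.univ : Finset (Fin 2))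
      ![e₁ * a, e₂ * b] ![e₁ * s, e₂ * t] hp
  simp only [Fin.sum_univ_two, Matrix.cons_val_zero, Matrix.cons_val_one, Matrix.head_cons,
    Pi.add_apply] at key
  calc (c₁ * (a + s) ^ p + c₂ * (b + t) ^ p) ^ (1 / p)
      = ((e₁ * a + e₁ * s) ^ p + (e₂ * b + e₂ * t) ^ p) ^ (1 / p) := by
        rw [← mul_add, ← mul_add, ENNReal.mul_rpow_of_nonneg _ _ hp0,
          ENNReal.mul_rpow_of_nonneg _ _ hp0, hc1, hc2]
    _ ≤ ((e₁ * a) ^ p + (e₂ * b) ^ p) ^ (1 / p) +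
        ((e₁ * s) ^ p + (e₂ * t) ^ p) ^ (1 / p) := key
    _ = (c₁ * a ^ p + c₂ * b ^ p) ^ (1 / p) + (c₁ * s ^ p + c₂ * t ^ p) ^ (1 / p) := by
        rw [ENNReal.mul_rpow_of_nonneg _ _ hp0, ENNReal.mul_rpow_of_nonneg _ _ hp0,
          ENNReal.mul_rpow_of_nonneg _ _ hp0, ENNReal.mul_rpow_of_nonneg _ _ hp0, hc1, hc2]

/-- Kantorovich–Rubinstein duality for the weighted p-product metric. -/
theorem stmt17 {X₁ X₂ : Type*}
    (d₁ : X₁ → X₁ → ℝ≥0∞) (d₂ : X₂ → X₂ → ℝ≥0∞)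
    (h₁refl : ∀ x, d₁ x x = 0) (h₁symm : ∀ x y, d₁ x y = d₁ y x)
    (h₁tri : ∀ x y z, d₁ x z ≤ d₁ x y + d₁ y z)
    (h₂refl : ∀ x, d₂ x x = 0) (h₂symm : ∀ x y, d₂ x y = d₂ y x)
    (h₂tri : ∀ x y z, d₂ x z ≤ d₂ x y + d₂ y z)
    (p : ℕ) (hp : 1 ≤ p)
    (c₁ c₂ : ℝ≥0∞) (hc₁ : 0 < c₁) (hc₁' : c₁ ≤ 1) (hc₂ : 0 < c₂) (hc₂' : c₂ ≤ 1)
    (x₁ y₁ : X₁) (x₂ y₂ : X₂) :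
    let ρ : ℝ≥0∞ → ℝ≥0∞ → ℝ≥0∞ :=
      fun u v => (c₁ * u ^ (p : ℝ) + c₂ * v ^ (p : ℝ)) ^ (1 / (p : ℝ))
    let dp : ℝ≥0∞ := ρ (d₁ x₁ y₁) (d₂ x₂ y₂)
    -- the specific nonexpansive functions f₁ = d₁(x₁,·), f₂ = d₂(x₂,·) attain dp
    de (ρ (d₁ x₁ x₁) (d₂ x₂ x₂)) (ρ (d₁ x₁ y₁) (d₂ x₂ y₂)) = dp ∧
    -- hence the Kantorovich distance (supremum over nonexpansive pairs) equals dp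
    (⨆ q : {q : (X₁ → ℝ≥0∞) × (X₂ → ℝ≥0∞) //
        (∀ x y, de (q.1 x) (q.1 y) ≤ d₁ x y) ∧ (∀ x y, de (q.2 x) (q.2 y) ≤ d₂ x y)},
      de (ρ (q.1.1 x₁) (q.1.2 x₂)) (ρ (q.1.1 y₁) (q.1.2 y₂))) = dp := by
  intro ρ dp
  have hpR : (1 : ℝ) ≤ (p : ℝ) := by exact_mod_cast hp
  have hp0 : (0 : ℝ) ≤ (p : ℝ) := le_trans zero_le_one hpR
  have hppos : (0 : ℝ) < (p : ℝ) := lt_of_lt_of_le zero_lt_one hpR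
  -- monotonicity of ρ
  have ρmono : ∀ a b a' b', a ≤ a' → b ≤ b' → ρ a b ≤ ρ a' b' := by
    intro a b a' b' ha hb
    exact ENNReal.rpow_le_rpow
      (add_le_add (mul_le_mul_right (ENNReal.rpow_le_rpow ha hp0) c₁)
        (mul_le_mul_right (ENNReal.rpow_le_rpow hb hp0) c₂))
      (by positivity)
  -- key nonexpansiveness of ρ
  have ρkey : ∀ a b u v, de (ρ a b) (ρ u v) ≤ ρ (de a u) (de b v) := by
    intro a b u v
    have le_add : ∀ s t : ℝ≥0∞, s ≤ t + de s t := by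
      intro s t
      exact (de_le_iff.mp le_rfl).1
    refine de_le_iff.mpr ⟨?_, ?_⟩
    · calc ρ a b ≤ ρ (u + de a u) (v + de b v) := ρmono _ _ _ _ (le_add a u) (le_add b v)
        _ ≤ ρ u v + ρ (de a u) (de b v) := weighted_minkowski hpR c₁ c₂ u v (de a u) (de b v)
    · have de_symm : ∀ s t : ℝ≥0∞, de s t = de t s := fun s t => add_comm _ _
      calc ρ u v ≤ ρ (a + de u a) (b + de v b) := ρmono _ _ _ _ (le_add u a) (le_add v b)
        _ ≤ ρ a b + ρ (de u a) (de v b) := weighted_minkowski hpR c₁ c₂ a b (de u a) (de v b)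
        _ = ρ a b + ρ (de a u) (de b v) := by rw [de_symm u a, de_symm v b]
  -- part 1
  have part1 : de (ρ (d₁ x₁ x₁) (d₂ x₂ x₂)) (ρ (d₁ x₁ y₁) (d₂ x₂ y₂)) = dp := by
    have hρ00 : ρ (d₁ x₁ x₁) (d₂ x₂ x₂) = 0 := by
      simp only [ρ, h₁refl, h₂refl]
      rw [ENNReal.zero_rpow_of_pos hppos, mul_zero, mul_zero, add_zero]
      exact ENNReal.zero_rpow_of_pos (by positivity)
    rw [hρ00, de_zero_left]
  refine ⟨part1, ?_⟩
  -- part 2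
  apply le_antisymm
  · apply iSup_le
    rintro ⟨⟨f₁, f₂⟩, hf₁, hf₂⟩
    calc de (ρ (f₁ x₁) (f₂ x₂)) (ρ (f₁ y₁) (f₂ y₂))
        ≤ ρ (de (f₁ x₁) (f₁ y₁)) (de (f₂ x₂) (f₂ y₂)) := ρkey _ _ _ _
      _ ≤ ρ (d₁ x₁ y₁) (d₂ x₂ y₂) := ρmono _ _ _ _ (hf₁ x₁ y₁) (hf₂ x₂ y₂)
  · have hq₁ : ∀ x y, de (d₁ x₁ x) (d₁ x₁ y) ≤ d₁ x y := by
      intro x y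
      refine de_le_iff.mpr ⟨?_, ?_⟩
      · calc d₁ x₁ x ≤ d₁ x₁ y + d₁ y x := h₁tri _ _ _
          _ = d₁ x₁ y + d₁ x y := by rw [h₁symm y x]
      · exact h₁tri _ _ _
    have hq₂ : ∀ x y, de (d₂ x₂ x) (d₂ x₂ y) ≤ d₂ x y := by
      intro x y
      refine de_le_iff.mpr ⟨?_, ?_⟩
      · calc d₂ x₂ x ≤ d₂ x₂ y + d₂ y x := h₂tri _ _ _
          _ = d₂ x₂ y + d₂ x y := by rw [h₂symm y x]
      · exact h₂tri _ _ _
    have := le_iSup (fun q : {q : (X₁ → ℝ≥0∞) × (X₂ → ℝ≥0∞) //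
        (∀ x y, de (q.1 x) (q.1 y) ≤ d₁ x y) ∧ (∀ x y, de (q.2 x) (q.2 y) ≤ d₂ x y)} =>
      de (ρ (q.1.1 x₁) (q.1.2 x₂)) (ρ (q.1.1 y₁) (q.1.2 y₂)))
      ⟨⟨fun x => d₁ x₁ x, fun x => d₂ x₂ x⟩, hq₁, hq₂⟩
    simpa [part1] using this
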